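/- Let γ ∈ (0, 1/L). If z ∈ H satisfies z = prox_{γg}(z - γF(z̄)) where z̄ = prox_{γg}(z - γF(z)), then z = z̄ and z ∈ zer(F + ∂g). -/

import Mathlib

open scoped RealInnerProductSpace

/-- `g` is proper: finite somewhere and never `⊥`. -/
def IsProperEF {H : Type*} (g : H → EReal) : Prop :=
  (∃ x, g x ≠ ⊤) ∧ ∀ x, g x ≠ ⊥

/-- `g` is convex (extended-real-valued). -/
def IsConvexEF {H : Type*} [NormedAddCommGroup H] [InnerProductSpace ℝ H]
    (g : H → EReal) : Prop :=
  ∀ x y : H, ∀ a b : ℝ, 0 ≤ a → 0 ≤ b → a + b = 1 →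
    g (a • x + b • y) ≤ (a : EReal) * g x + (b : EReal) * g y

/-- `ξ` is a subgradient of `g` at `z`, i.e. `ξ ∈ ∂g(z)`. -/
def InSubdiff {H : Type*} [NormedAddCommGroup H] [InnerProductSpace ℝ H]
    (g : H → EReal) (z ξ : H) : Prop :=
  ∀ y : H, g z + ((⟪ξ, y - z⟫ : ℝ) : EReal) ≤ g y

/-- `p = prox_{γ g}(x)`, i.e. `p` minimizes `g(·) + (1/(2γ))‖x - ·‖²`. -/
def IsProx {H : Type*} [NormedAddCommGroup H] [InnerProductSpace ℝ H]
    (g : H → EReal) (γ : ℝ) (x p : H) : Prop :=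
  ∀ y : H, g p + ((1 / (2 * γ) * ‖x - p‖ ^ 2 : ℝ) : EReal) ≤
    g y + ((1 / (2 * γ) * ‖x - y‖ ^ 2 : ℝ) : EReal)

/-- The Lyapunov function `V`. -/
noncomputable def lyapV {H : Type*} [NormedAddCommGroup H] [InnerProductSpace ℝ H]
    (F : H → H) (γ : ℝ) (z zb zp : H) : ℝ :=
  (2 / γ) * ⟪z - zp, F z - F zb⟫ + (1 / γ ^ 2) * ‖zp - zb‖ ^ 2 + (1 / γ ^ 2) * ‖z - zp‖ ^ 2


/-! The optimality condition of the proximal step says that `γ⁻¹ (x - p) ∈ ∂g(p)` whenever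
`p = prox_{γg}(x)`. Applied to both steps it gives `γ⁻¹ (z - z̄) - F z ∈ ∂g(z̄)` and
`-F z̄ ∈ ∂g(z)`; monotonicity of `∂g` then yields
`γ⁻¹ ‖z - z̄‖² ≤ ⟪F z - F z̄, z - z̄⟫ ≤ L ‖z - z̄‖²`, which forces `z = z̄` since `L < γ⁻¹`. -/

section

variable {H : Type*} [NormedAddCommGroup H] [InnerProductSpace ℝ H]
  {g : H → EReal} {γ : ℝ} {x p : H}

lemma IsProx.ne_top (hg : ∃ y, g y ≠ ⊤) (hp : IsProx g γ x p) : g p ≠ ⊤ := by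
  obtain ⟨y, hy⟩ := hg
  intro htop
  have h := hp y
  rw [htop, EReal.top_add_coe, top_le_iff] at h
  exact EReal.add_lt_top hy (EReal.coe_ne_top _) |>.ne h

lemma IsProx.mul_le_mul_along_segment (hconv : IsConvexEF g) (hp : IsProx g γ x p)
    {y : H} {a b t : ℝ} (ha : g p = a) (hb : g y = b) (ht0 : 0 ≤ t) (ht1 : t ≤ 1) :
    t * (a + γ⁻¹ * ⟪x - p, y - p⟫) ≤ t * (b + t * (‖y - p‖ ^ 2 / (2 * γ))) := by
  have hnorm : ‖x - ((1 - t) • p + t • y)‖ ^ 2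
      = ‖x - p‖ ^ 2 - 2 * t * ⟪x - p, y - p⟫ + t ^ 2 * ‖y - p‖ ^ 2 := by
    rw [show x - ((1 - t) • p + t • y) = (x - p) - t • (y - p) by module, norm_sub_sq_real,
      real_inner_smul_right, norm_smul, mul_pow, Real.norm_eq_abs, sq_abs]
    ring
  have hseg : g ((1 - t) • p + t • y) ≤ (((1 - t) * a + t * b : ℝ) : EReal) := by
    calc g ((1 - t) • p + t • y) ≤ ((1 - t : ℝ) : EReal) * g p + (t : EReal) * g y :=
          hconv p y (1 - t) t (by linarith) ht0 (by ring)
      _ = (((1 - t) * a + t * b : ℝ) : EReal) := by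
          rw [ha, hb, ← EReal.coe_mul, ← EReal.coe_mul, ← EReal.coe_add]
  have hmin := (hp ((1 - t) • p + t • y)).trans (add_le_add_left hseg _)
  rw [ha, ← EReal.coe_add, ← EReal.coe_add, EReal.coe_le_coe_iff, hnorm] at hmin
  linear_combination hmin

open Filter Topology in
lemma IsProx.inSubdiff (hproper : IsProperEF g) (hconv : IsConvexEF g)
    (hp : IsProx g γ x p) : InSubdiff g p (γ⁻¹ • (x - p)) := by
  intro y
  rcases eq_or_ne (g y) ⊤ with hy | hy
  · rw [hy]
    exact le_top
  lift g p to ℝ using ⟨hp.ne_top hproper.1, hproper.2 p⟩ with a ha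
  lift g y to ℝ using ⟨hy, hproper.2 y⟩ with b hb
  rw [← EReal.coe_add, EReal.coe_le_coe_iff, real_inner_smul_left]
  have hsegment : ∀ t ∈ Set.Ioo (0 : ℝ) 1,
      a + γ⁻¹ * ⟪x - p, y - p⟫ ≤ b + t * (‖y - p‖ ^ 2 / (2 * γ)) := fun t ht =>
    le_of_mul_le_mul_left (hp.mul_le_mul_along_segment hconv ha.symm hb.symm ht.1.le ht.2.le)
      ht.1
  have hlim : Tendsto (fun t : ℝ => b + t * (‖y - p‖ ^ 2 / (2 * γ))) (𝓝[>] 0) (𝓝 b) := by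
    have : Continuous fun t : ℝ => b + t * (‖y - p‖ ^ 2 / (2 * γ)) := by fun_prop
    simpa using this.continuousWithinAt.tendsto (x := 0) (s := Set.Ioi 0)
  exact ge_of_tendsto hlim (mem_of_superset (Ioo_mem_nhdsGT one_pos) hsegment)

lemma IsProx.inSubdiff_of_forward_step (hproper : IsProperEF g) (hconv : IsConvexEF g)
    (hγ : γ ≠ 0) {v : H} (hp : IsProx g γ (x - γ • v) p) :
    InSubdiff g p (γ⁻¹ • (x - p) - v) := by
  have h := hp.inSubdiff hproper hconv
  rwa [show x - γ • v - p = (x - p) - γ • v by abel, smul_sub, smul_smul, inv_mul_cancel₀ hγ,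
    one_smul] at h

lemma InSubdiff.inner_sub_nonneg {y ξ η : H} (hx : InSubdiff g x ξ) (hy : InSubdiff g y η)
    (hx_top : g x ≠ ⊤) (hx_bot : g x ≠ ⊥) : 0 ≤ ⟪ξ - η, x - y⟫ := by
  have hxy := hx y
  have hyx := hy x
  lift g x to ℝ using ⟨hx_top, hx_bot⟩ with a ha
  have hy_top : g y ≠ ⊤ := fun h => by
    rw [h, EReal.top_add_coe, top_le_iff] at hyx
    exact EReal.coe_ne_top a hyx
  have hy_bot : g y ≠ ⊥ := fun h => by
    rw [h, le_bot_iff, ← EReal.coe_add] at hxy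
    exact EReal.coe_ne_bot _ hxy
  lift g y to ℝ using ⟨hy_top, hy_bot⟩ with b hb
  rw [← EReal.coe_add, EReal.coe_le_coe_iff] at hxy hyx
  rw [← neg_sub x y, inner_neg_right] at hxy
  rw [inner_sub_left]
  linarith

end

lemma eq_of_lipschitz_of_mul_norm_sq_le_inner {H : Type*} [NormedAddCommGroup H]
    [InnerProductSpace ℝ H] {F : H → H} {L c : ℝ} {x y : H}
    (hlip : ‖F x - F y‖ ≤ L * ‖x - y‖) (hLc : L < c)
    (h : c * ‖x - y‖ ^ 2 ≤ ⟪F x - F y, x - y⟫) : x = y := by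
  have hcs : ⟪F x - F y, x - y⟫ ≤ L * ‖x - y‖ ^ 2 :=
    calc ⟪F x - F y, x - y⟫ ≤ ‖F x - F y‖ * ‖x - y‖ := real_inner_le_norm _ _
      _ ≤ L * ‖x - y‖ * ‖x - y‖ := mul_le_mul_of_nonneg_right hlip (norm_nonneg _)
      _ = L * ‖x - y‖ ^ 2 := by ring
  have hzero : ‖x - y‖ ^ 2 = 0 :=
    le_antisymm (by nlinarith [sq_nonneg ‖x - y‖]) (sq_nonneg _)
  rwa [pow_eq_zero_iff two_ne_zero, norm_eq_zero, sub_eq_zero] at hzero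

theorem stmt11_general {H : Type*} [NormedAddCommGroup H] [InnerProductSpace ℝ H]
    (F : H → H) (L γ : ℝ)
    (hlip : ∀ x y : H, ‖F x - F y‖ ≤ L * ‖x - y‖)
    (g : H → EReal) (hproper : IsProperEF g) (hconv : IsConvexEF g)
    (hγ0 : 0 < γ) (hγ1 : γ < 1 / L)
    (z zb : H) (hzb : IsProx g γ (z - γ • F z) zb)
    (hfix : IsProx g γ (z - γ • F zb) z) :
    z = zb ∧ InSubdiff g z (-F z) := by
  have hL : 0 < L := one_div_pos.mp (hγ0.trans hγ1)
  have hLγ : L < γ⁻¹ := by simpa using (lt_one_div hγ0 hL).mp hγ1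
  have hsub_zb : InSubdiff g zb (γ⁻¹ • (z - zb) - F z) :=
    hzb.inSubdiff_of_forward_step hproper hconv hγ0.ne'
  have hsub_z : InSubdiff g z (-F zb) := by
    simpa using hfix.inSubdiff_of_forward_step hproper hconv hγ0.ne'
  have hmono := hsub_z.inner_sub_nonneg hsub_zb (hfix.ne_top hproper.1) (hproper.2 z)
  rw [show -F zb - (γ⁻¹ • (z - zb) - F z) = (F z - F zb) - γ⁻¹ • (z - zb) by abel,
    inner_sub_left, real_inner_smul_left, real_inner_self_eq_norm_sq] at hmono
  have hzzb : z = zb :=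
    eq_of_lipschitz_of_mul_norm_sq_le_inner (hlip z zb) hLγ (by linarith)
  subst hzzb
  exact ⟨rfl, hsub_z⟩

theorem stmt11 {H : Type*} [NormedAddCommGroup H] [InnerProductSpace ℝ H] [CompleteSpace H]
    (F : H → H) (L γ : ℝ) (hL : 0 < L)
    (hmono : ∀ x y : H, 0 ≤ ⟪F x - F y, x - y⟫)
    (hlip : ∀ x y : H, ‖F x - F y‖ ≤ L * ‖x - y‖)
    (g : H → EReal) (hproper : IsProperEF g) (hconv : IsConvexEF g)
    (hlsc : LowerSemicontinuous g)
    (hγ0 : 0 < γ) (hγ1 : γ < 1 / L)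
    (z zb : H) (hzb : IsProx g γ (z - γ • F z) zb)
    (hfix : IsProx g γ (z - γ • F zb) z) :
    z = zb ∧ InSubdiff g z (-F z) :=
  stmt11_general F L γ hlip g hproper hconv hγ0 hγ1 z zb hzb hfix
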